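/- arXiv:2511.22698 — 3 statements merged into one kernel-verified Lean document; each statement's English description precedes it below -/
import Mathlib

section
/- (Guessing Geodesics Lemma.) For every real λ ≥ 0 there exists δ ≥ 0 such that the following holds. Let Γ be a connected simple graph with vertex set V and graph distance d. Suppose that for every pair x, y ∈ V there is a set L(x,y) ⊆ V containing x and y whose induced subgraph of Γ is connected, such that (i) for all x, y, z ∈ V, every vertex of L(x,y) is within distance λ of some vertex of L(x,z) ∪ L(z,y), and (ii) whenever d(x,y) ≤ 1 the set L(x,y) has diameter at most λ with respect to d. Then d is δ-hyperbolic: for all w, x, y, z ∈ V, (x·z)_w ≥ min((x·y)_w, (y·z)_w) − δ. -/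
/-!
Every `L x y` lies within a uniform distance `K` of every geodesic from `x` to `y`. Otherwise let
`v ∈ L x y` be at distance `D > K` from a geodesic, attained at its point `t`. Cutting the
geodesic at the points `3D` before and after `t` and applying slimness twice puts a point within
`2λ` of `v` into the set `L` of one of the three subsegments. The outer segments are shorter and
lie `3D` away from `t` (or are single points), which contradicts induction on the length; the
middle one has length `≤ 6D`, and by bisection its set `L` lies within `λ (log₂ (6D) + 2)` of it,
which is impossible once `D` is large.

Hence `d(x,u) + d(u,y) ≤ d(x,y) + 2K` for `u ∈ L x y`, which makes `d(w, L x y)` equal to the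
Gromov product `(x·y)_w` up to a constant: the lower bound is the triangle inequality, and for the
upper bound one walks inside the connected set `L x y` from `x` to `y` and stops where the walk
passes from near `L x w` to near `L w y`. Slimness of the triangle `x y z` then gives the
four-point condition.
-/

open SimpleGraph Filter Topology

namespace GuessingGeodesics

variable {V : Type*} {Γ : SimpleGraph V}

lemma cast_dist_triangle (hconn : Γ.Connected) (u v w : V) :
    (Γ.dist u w : ℝ) ≤ Γ.dist u v + Γ.dist v w := by
  exact_mod_cast hconn.dist_triangle

lemma dist_le_sub_of_dist_succ_le_one (hconn : Γ.Connected) {f : ℕ → V} {n : ℕ}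
    (hf : ∀ i < n, Γ.dist (f i) (f (i + 1)) ≤ 1) {i j : ℕ} (hij : i ≤ j) (hjn : j ≤ n) :
    Γ.dist (f i) (f j) ≤ j - i := by
  induction j, hij using Nat.le_induction with
  | base => simp
  | succ j hij ih =>
    calc Γ.dist (f i) (f (j + 1)) ≤ Γ.dist (f i) (f j) + Γ.dist (f j) (f (j + 1)) :=
          hconn.dist_triangle
      _ ≤ (j - i) + 1 := add_le_add (ih (by omega)) (hf j (by omega))
      _ = j + 1 - i := by omega

def IsGeodesicOn (Γ : SimpleGraph V) (f : ℕ → V) (n : ℕ) : Prop :=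
  ∀ i j, i ≤ j → j ≤ n → Γ.dist (f i) (f j) = j - i

lemma IsGeodesicOn.dist_succ_le_one {f : ℕ → V} {n : ℕ} (hf : IsGeodesicOn Γ f n) :
    ∀ i < n, Γ.dist (f i) (f (i + 1)) ≤ 1 := fun i hi => by
  rw [hf i (i + 1) (by omega) hi]; omega

lemma isGeodesicOn_of_dist_succ_le_one (hconn : Γ.Connected) {f : ℕ → V} {n : ℕ}
    (hf : ∀ i < n, Γ.dist (f i) (f (i + 1)) ≤ 1) (hn : Γ.dist (f 0) (f n) = n) :
    IsGeodesicOn Γ f n := by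
  intro i j hij hjn
  have h₁ := dist_le_sub_of_dist_succ_le_one hconn hf (Nat.zero_le i) (hij.trans hjn)
  have h₂ := dist_le_sub_of_dist_succ_le_one hconn hf hij hjn
  have h₃ := dist_le_sub_of_dist_succ_le_one hconn hf hjn le_rfl
  have t₁ : Γ.dist (f 0) (f j) ≤ _ := hconn.dist_triangle (v := f i)
  have t₂ : Γ.dist (f 0) (f n) ≤ _ := hconn.dist_triangle (v := f j)
  omega

lemma exists_isGeodesicOn (hconn : Γ.Connected) (x y : V) :
    ∃ f : ℕ → V, f 0 = x ∧ f (Γ.dist x y) = y ∧ IsGeodesicOn Γ f (Γ.dist x y) := by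
  obtain ⟨p, hp⟩ := hconn.exists_walk_length_eq_dist x y
  refine ⟨p.getVert, p.getVert_zero, hp ▸ p.getVert_length, hp ▸ ?_⟩
  refine isGeodesicOn_of_dist_succ_le_one hconn
    (fun i hi => (dist_eq_one_iff_adj.2 (p.adj_getVert_succ hi)).le) ?_
  rw [p.getVert_zero, p.getVert_length, hp]

lemma eventually_mul_log_add_four_lt (c : ℝ) :
    ∀ᶠ D : ℕ in atTop, c * (Nat.log 2 (6 * D) + 4) < D := by
  have hpow : ∀ᶠ m : ℕ in atTop, 6 * c * (m + 4) < 2 ^ m := by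
    have h : Tendsto (fun m : ℕ => 6 * c * (m / 2 ^ m) + 24 * c * (1 / 2 ^ m)) atTop (𝓝 0) := by
      simpa using ((tendsto_pow_const_div_const_pow_of_one_lt 1 one_lt_two).const_mul (6 * c)).add
        ((tendsto_pow_const_div_const_pow_of_one_lt 0 one_lt_two).const_mul (24 * c))
    filter_upwards [h.eventually (gt_mem_nhds one_pos)] with m hm
    have h2m : (0 : ℝ) < 2 ^ m := by positivity
    calc 6 * c * (m + 4) = (6 * c * (m / 2 ^ m) + 24 * c * (1 / 2 ^ m)) * 2 ^ m := by
          field_simp; ring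
      _ < 1 * 2 ^ m := by gcongr
      _ = 2 ^ m := one_mul _
  have hlog : Tendsto (fun D : ℕ => Nat.log 2 (6 * D)) atTop atTop :=
    tendsto_atTop_atTop.2 fun m => ⟨2 ^ m, fun D hD =>
      Nat.le_log_of_pow_le one_lt_two (by omega)⟩
  filter_upwards [hlog.eventually hpow, eventually_gt_atTop 0] with D hD hD0
  have h : ((2 ^ Nat.log 2 (6 * D) : ℕ) : ℝ) ≤ 6 * D := by
    exact_mod_cast Nat.pow_log_le_self 2 (by omega : 6 * D ≠ 0)
  push_cast at h
  linarith

lemma exists_forall_mul_log_add_four_lt (lam : ℝ) :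
    ∃ K : ℝ, 3 * lam ≤ K ∧ ∀ D : ℕ, K < D → lam * (Nat.log 2 (6 * D) + 4) < D := by
  obtain ⟨N, hN⟩ := eventually_atTop.1 (eventually_mul_log_add_four_lt lam)
  refine ⟨max (3 * lam) N, le_max_left _ _, fun D hD => hN D ?_⟩
  exact_mod_cast (le_max_right _ _).trans hD.le

variable {L : V → V → Set V} {lam : ℝ}

def IsSlim (Γ : SimpleGraph V) (L : V → V → Set V) (lam : ℝ) : Prop :=
  ∀ x y z : V, ∀ v ∈ L x y, ∃ u ∈ L x z ∪ L z y, (Γ.dist v u : ℝ) ≤ lam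

def IsSmallOnEdges (Γ : SimpleGraph V) (L : V → V → Set V) (lam : ℝ) : Prop :=
  ∀ x y : V, Γ.dist x y ≤ 1 → ∀ u ∈ L x y, ∀ v ∈ L x y, (Γ.dist u v : ℝ) ≤ lam

lemma IsSlim.exists_dist_le_two_mul (hconn : Γ.Connected) (hslim : IsSlim Γ L lam)
    (hlam : 0 ≤ lam) {x y v : V} (hv : v ∈ L x y) (p q : V) :
    ∃ u, (u ∈ L x p ∨ u ∈ L p q ∨ u ∈ L q y) ∧ (Γ.dist v u : ℝ) ≤ 2 * lam := by
  obtain ⟨u, hu | hu, hvu⟩ := hslim x y p v hv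
  · exact ⟨u, Or.inl hu, by linarith⟩
  obtain ⟨u', hu' | hu', huu'⟩ := hslim p y q u hu
  all_goals refine ⟨u', by tauto, ?_⟩
  all_goals linarith [cast_dist_triangle hconn v u u']

theorem exists_dist_le_of_dist_succ_le_one (hconn : Γ.Connected) (hmem : ∀ x y, x ∈ L x y)
    (hslim : IsSlim Γ L lam) (hsmall : IsSmallOnEdges Γ L lam) {f : ℕ → V} {n : ℕ}
    (hf : ∀ i < n, Γ.dist (f i) (f (i + 1)) ≤ 1) (k : ℕ) {a b : ℕ} (hab : a ≤ b) (hbn : b ≤ n)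
    (hk : b - a ≤ 2 ^ k) {v : V} (hv : v ∈ L (f a) (f b)) :
    ∃ i, a ≤ i ∧ i ≤ b ∧ (Γ.dist v (f i) : ℝ) ≤ lam * (k + 1) := by
  induction k generalizing a b v with
  | zero =>
    have hab1 : Γ.dist (f a) (f b) ≤ 1 :=
      (dist_le_sub_of_dist_succ_le_one hconn hf hab hbn).trans (by simpa using hk)
    exact ⟨a, le_rfl, hab, by simpa using hsmall _ _ hab1 v hv (f a) (hmem _ _)⟩
  | succ k ih =>
    have hpow : 2 ^ (k + 1) = 2 * 2 ^ k := pow_succ' 2 k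
    obtain ⟨u, hu, hvu⟩ := hslim _ _ (f (min b (a + 2 ^ k))) v hv
    obtain ⟨i, hai, hib, hui⟩ : ∃ i, a ≤ i ∧ i ≤ b ∧ (Γ.dist u (f i) : ℝ) ≤ lam * (k + 1) := by
      rcases hu with hu | hu
      · obtain ⟨i, h₁, h₂, h₃⟩ := ih (by omega) (by omega) (by omega) hu
        exact ⟨i, h₁, by omega, h₃⟩
      · obtain ⟨i, h₁, h₂, h₃⟩ := ih (by omega) hbn (by omega) hu
        exact ⟨i, by omega, h₂, h₃⟩
    refine ⟨i, hai, hib, ?_⟩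
    push_cast
    linarith [cast_dist_triangle hconn v u (f i)]

theorem exists_dist_le_of_isGeodesicOn (hconn : Γ.Connected) (hmem : ∀ x y, x ∈ L x y)
    (hslim : IsSlim Γ L lam) (hsmall : IsSmallOnEdges Γ L lam) (hlam : 0 ≤ lam) {K : ℝ}
    (hK : 3 * lam ≤ K) (hKlog : ∀ D : ℕ, K < D → lam * (Nat.log 2 (6 * D) + 4) < D)
    {f : ℕ → V} {n : ℕ} (hf : IsGeodesicOn Γ f n) {a b : ℕ} (hab : a ≤ b) (hbn : b ≤ n)
    {v : V} (hv : v ∈ L (f a) (f b)) :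
    ∃ i, a ≤ i ∧ i ≤ b ∧ (Γ.dist v (f i) : ℝ) ≤ K := by
  induction h : b - a using Nat.strong_induction_on generalizing a b v with
  | _ l ih =>
  by_contra! hfar
  obtain ⟨t, ht, htmin⟩ := (Finset.Icc a b).exists_min_image (fun i => Γ.dist v (f i))
    ⟨a, Finset.mem_Icc.2 ⟨le_rfl, hab⟩⟩
  obtain ⟨hat, htb⟩ := Finset.mem_Icc.1 ht
  set D := Γ.dist v (f t)
  have hKD : K < D := hfar t hat htb
  have hD : 0 < D := by exact_mod_cast (by linarith : (0 : ℝ) < D)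
  have hDle : ∀ i, a ≤ i → i ≤ b → (D : ℝ) ≤ Γ.dist v (f i) := fun i h₁ h₂ => by
    exact_mod_cast htmin i (Finset.mem_Icc.2 ⟨h₁, h₂⟩)
  have hout : ∀ c e, a ≤ c → c ≤ e → e ≤ b → (c = e ∨ e + 3 * D ≤ t ∨ t + 3 * D ≤ c) →
      ∀ u ∈ L (f c) (f e), (Γ.dist v u : ℝ) ≤ 2 * lam → False := by
    intro c e hac hce heb hce' u hu hvu
    rcases hce' with rfl | hfar'
    · have hu' := hsmall _ _ (by simp) u hu (f c) (hmem _ _)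
      linarith [hDle c hac heb, cast_dist_triangle hconn v u (f c)]
    · obtain ⟨i, hci, hie, hui⟩ := ih (e - c) (by omega) hce (by omega) hu rfl
      have hit : 3 * D ≤ Γ.dist (f i) (f t) := by
        rcases hfar' with h | h
        · rw [hf i t (by omega) (by omega)]; omega
        · rw [SimpleGraph.dist_comm, hf t i (by omega) (by omega)]; omega
      have hit' : (3 * D : ℝ) ≤ Γ.dist (f i) (f t) := by exact_mod_cast hit
      have hvi : (Γ.dist (f i) v : ℝ) = Γ.dist v (f i) := by rw [SimpleGraph.dist_comm]
      linarith [cast_dist_triangle hconn (f i) v (f t), cast_dist_triangle hconn v u (f i)]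
  obtain ⟨u, hu | hu | hu, hvu⟩ :=
    hslim.exists_dist_le_two_mul hconn hlam hv (f (max a (t - 3 * D))) (f (min b (t + 3 * D)))
  · exact hout _ _ le_rfl (by omega) (by omega) (by omega) u hu hvu
  · obtain ⟨i, hi₁, hi₂, hui⟩ := exists_dist_le_of_dist_succ_le_one hconn hmem hslim hsmall
      hf.dist_succ_le_one (Nat.log 2 (6 * D) + 1) (by omega) (by omega)
      (by have := Nat.lt_pow_succ_log_self one_lt_two (6 * D); omega) hu
    have := hDle i (by omega) (by omega)
    have := hKlog D hKD
    push_cast at hui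
    linarith [cast_dist_triangle hconn v u (f i)]
  · exact hout _ _ (by omega) (by omega) le_rfl (by omega) u hu hvu

def IsTaut (Γ : SimpleGraph V) (L : V → V → Set V) (C : ℝ) : Prop :=
  ∀ x y : V, ∀ u ∈ L x y, (Γ.dist x u : ℝ) + Γ.dist u y ≤ Γ.dist x y + C

theorem IsSlim.isTaut (hconn : Γ.Connected) (hmem : ∀ x y, x ∈ L x y)
    (hslim : IsSlim Γ L lam) (hsmall : IsSmallOnEdges Γ L lam) (hlam : 0 ≤ lam) {K : ℝ}
    (hK : 3 * lam ≤ K) (hKlog : ∀ D : ℕ, K < D → lam * (Nat.log 2 (6 * D) + 4) < D) :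
    IsTaut Γ L (2 * K) := by
  intro x y u hu
  obtain ⟨f, rfl, hfy, hf⟩ := exists_isGeodesicOn hconn x y
  set n := Γ.dist (f 0) y
  rw [← hfy] at hu ⊢
  obtain ⟨i, -, hin, hui⟩ := exists_dist_le_of_isGeodesicOn hconn hmem hslim hsmall hlam hK hKlog
    hf (Nat.zero_le n) le_rfl hu
  have h₀ : (Γ.dist (f 0) (f i) : ℝ) + Γ.dist (f i) (f n) = n := by
    rw [hf 0 i (Nat.zero_le i) hin, hf i n hin le_rfl]
    rw [Nat.sub_zero, Nat.cast_sub hin]; ring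
  have hiu : (Γ.dist (f i) u : ℝ) = Γ.dist u (f i) := by rw [SimpleGraph.dist_comm]
  linarith [cast_dist_triangle hconn (f 0) (f i) u, cast_dist_triangle hconn u (f i) (f n)]

noncomputable def gromovProduct (Γ : SimpleGraph V) (w x y : V) : ℝ :=
  ((Γ.dist x w : ℝ) + Γ.dist y w - Γ.dist x y) / 2

variable {C : ℝ}

lemma IsTaut.gromovProduct_sub_le_dist (hconn : Γ.Connected) (htaut : IsTaut Γ L C)
    {x y u : V} (hu : u ∈ L x y) (w : V) :
    gromovProduct Γ w x y - C / 2 ≤ Γ.dist w u := by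
  have h₁ : (Γ.dist y u : ℝ) = Γ.dist u y := by rw [SimpleGraph.dist_comm]
  have h₂ : (Γ.dist u w : ℝ) = Γ.dist w u := by rw [SimpleGraph.dist_comm]
  unfold gromovProduct
  linarith [htaut x y u hu, cast_dist_triangle hconn x u w, cast_dist_triangle hconn y u w]

lemma IsTaut.dist_le_gromovProduct (hconn : Γ.Connected) (htaut : IsTaut Γ L C)
    {w x y a b u u' : V} (hu : u ∈ L x w) (hu' : u' ∈ L w y) (hau : (Γ.dist a u : ℝ) ≤ lam)
    (hbu' : (Γ.dist b u' : ℝ) ≤ lam) (hab : Γ.dist a b ≤ 1) :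
    Γ.dist w a ≤ gromovProduct Γ w x y + C + 3 * lam + 1 := by
  have hab' : (Γ.dist a b : ℝ) ≤ 1 := by exact_mod_cast hab
  have h₁ : (Γ.dist u a : ℝ) = Γ.dist a u := by rw [SimpleGraph.dist_comm]
  have h₂ : (Γ.dist u' b : ℝ) = Γ.dist b u' := by rw [SimpleGraph.dist_comm]
  have h₃ : (Γ.dist u w : ℝ) = Γ.dist w u := by rw [SimpleGraph.dist_comm]
  have h₄ : (Γ.dist w y : ℝ) = Γ.dist y w := by rw [SimpleGraph.dist_comm]
  have h₅ : (Γ.dist u' u : ℝ) = Γ.dist u u' := by rw [SimpleGraph.dist_comm]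
  have hxy : (Γ.dist x y : ℝ) ≤
      Γ.dist x u + Γ.dist u a + Γ.dist a b + Γ.dist b u' + Γ.dist u' y := by
    linarith [cast_dist_triangle hconn x u a, cast_dist_triangle hconn x a b,
      cast_dist_triangle hconn x b u', cast_dist_triangle hconn x u' y]
  have huu' : (Γ.dist u u' : ℝ) ≤ Γ.dist u a + Γ.dist a b + Γ.dist b u' := by
    linarith [cast_dist_triangle hconn u a b, cast_dist_triangle hconn u b u']
  unfold gromovProduct
  linarith [htaut x w u hu, htaut w y u' hu', cast_dist_triangle hconn w u a,
    cast_dist_triangle hconn w u' u]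

theorem exists_mem_dist_le_gromovProduct (hconn : Γ.Connected) (hmem : ∀ x y, x ∈ L x y)
    (hmem' : ∀ x y, y ∈ L x y) (hind : ∀ x y, (Γ.induce (L x y)).Connected)
    (hslim : IsSlim Γ L lam) (hlam : 0 ≤ lam) (htaut : IsTaut Γ L C) (w x y : V) :
    ∃ a ∈ L x y, Γ.dist w a ≤ gromovProduct Γ w x y + C + 3 * lam + 1 := by
  let S : Set (L x y) := {a | ∃ u ∈ L x w, (Γ.dist a u : ℝ) ≤ lam}
  have hxS : ⟨x, hmem x y⟩ ∈ S := ⟨x, hmem x w, by simpa using hlam⟩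
  by_cases hyS : ⟨y, hmem' x y⟩ ∈ S
  · obtain ⟨u, hu, hyu⟩ := hyS
    exact ⟨y, hmem' x y, htaut.dist_le_gromovProduct hconn (b := y) hu (hmem' w y) hyu
      (by simpa using hlam) (by simp)⟩
  obtain ⟨p⟩ := (hind x y).preconnected ⟨x, hmem x y⟩ ⟨y, hmem' x y⟩
  obtain ⟨d, -, ⟨u, hu, hau⟩, hbS⟩ := p.exists_boundary_dart S hxS hyS
  obtain ⟨u', hu', hbu'⟩ := hslim x y w d.snd d.snd.2
  have hu'' : u' ∈ L w y := hu'.resolve_left fun h => hbS ⟨u', h, hbu'⟩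
  exact ⟨d.fst, d.fst.2, htaut.dist_le_gromovProduct hconn hu hu'' hau hbu'
    ((dist_eq_one_iff_adj (G := Γ)).2 d.adj).le⟩

theorem gromovProduct_ge_min_sub (hconn : Γ.Connected) (hmem : ∀ x y, x ∈ L x y)
    (hmem' : ∀ x y, y ∈ L x y) (hind : ∀ x y, (Γ.induce (L x y)).Connected)
    (hslim : IsSlim Γ L lam) (hlam : 0 ≤ lam) (htaut : IsTaut Γ L C) (w x y z : V) :
    min (gromovProduct Γ w x y) (gromovProduct Γ w y z) - (3 * C / 2 + 4 * lam + 1) ≤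
      gromovProduct Γ w x z := by
  obtain ⟨p, hp, hwp⟩ :=
    exists_mem_dist_le_gromovProduct hconn hmem hmem' hind hslim hlam htaut w x z
  obtain ⟨q, hq, hpq⟩ := hslim x z y p hp
  have hwq := cast_dist_triangle hconn w p q
  rcases hq with hq | hq
  · linarith [htaut.gromovProduct_sub_le_dist hconn hq w,
      min_le_left (gromovProduct Γ w x y) (gromovProduct Γ w y z)]
  · linarith [htaut.gromovProduct_sub_le_dist hconn hq w,
      min_le_right (gromovProduct Γ w x y) (gromovProduct Γ w y z)]

end GuessingGeodesics

/-- **Guessing Geodesics Lemma.** For every `λ ≥ 0` there is `δ ≥ 0` such that: if `Γ` is a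
connected simple graph and for every pair of vertices `x, y` there is a set `L x y` of vertices
containing `x` and `y`, inducing a connected subgraph, satisfying the `λ`-slimness condition (i)
and the small-diameter condition (ii), then the graph distance satisfies the four-point
`δ`-hyperbolicity condition for the Gromov product. -/
theorem stmt4 :
    ∀ lam : ℝ, 0 ≤ lam → ∃ δ : ℝ, 0 ≤ δ ∧
      ∀ (V : Type) (Γ : SimpleGraph V), Γ.Connected →
        ∀ L : V → V → Set V,
          (∀ x y : V, x ∈ L x y ∧ y ∈ L x y ∧ (Γ.induce (L x y)).Connected) →
          (∀ x y z : V, ∀ v ∈ L x y, ∃ u ∈ L x z ∪ L z y, (Γ.dist v u : ℝ) ≤ lam) →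
          (∀ x y : V, Γ.dist x y ≤ 1 →
            ∀ u ∈ L x y, ∀ v ∈ L x y, (Γ.dist u v : ℝ) ≤ lam) →
          ∀ w x y z : V,
            ((Γ.dist x w : ℝ) + (Γ.dist z w : ℝ) - (Γ.dist x z : ℝ)) / 2 ≥
              min (((Γ.dist x w : ℝ) + (Γ.dist y w : ℝ) - (Γ.dist x y : ℝ)) / 2)
                  (((Γ.dist y w : ℝ) + (Γ.dist z w : ℝ) - (Γ.dist y z : ℝ)) / 2) - δ := by
  intro lam hlam
  obtain ⟨K, hK, hKlog⟩ := GuessingGeodesics.exists_forall_mul_log_add_four_lt lam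
  refine ⟨3 * K + 4 * lam + 1, by linarith, ?_⟩
  intro V Γ hconn L hL hslim hsmall w x y z
  have hmem : ∀ x y, x ∈ L x y := fun x y => (hL x y).1
  have htaut := GuessingGeodesics.IsSlim.isTaut hconn hmem hslim hsmall hlam hK hKlog
  have h := GuessingGeodesics.gromovProduct_ge_min_sub hconn hmem (fun x y => (hL x y).2.1)
    (fun x y => (hL x y).2.2) hslim hlam htaut w x y z
  unfold GuessingGeodesics.gromovProduct at h
  linarith
end

section
/- Let a group G act by isometries on metric spaces X and Y, and let i : X → Y be a G-equivariant 1-Lipschitz map. Let f, g ∈ G and x, y ∈ X. Suppose the set {i(fⁿ·x) : n ∈ ℤ} is bounded in Y, and that there is a constant c > 0 with d_Y(i(gᵐ·y), i(gⁿ·y)) ≥ c·|m − n| for all integers m, n. Then for every B ≥ 0 there exists M ∈ ℕ such that for every m ≥ M and every h ∈ G there is some k ∈ {0, …, m} with d_X(h·(gᵏ·y), fⁿ·x) > B for every integer n. (That is, no h ∈ G maps the orbit segment {gᵏ·y : 0 ≤ k ≤ m} into the B-neighborhood of the orbit {fⁿ·x : n ∈ ℤ}; so f and g are independent hyperbolic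 elements.) -/
/-- Let a group `G` act by isometries on metric spaces `X` and `Y`, and let `i : X → Y` be a
`G`-equivariant 1-Lipschitz map. If the image of the `f`-orbit of `x` under `i` is bounded in
`Y`, while `i` of the `g`-orbit of `y` is a quasi-isometrically embedded copy of `ℤ`, then for
every `B ≥ 0` there is `M` such that for every `m ≥ M` no `h ∈ G` maps the orbit segment
`{gᵏ·y : 0 ≤ k ≤ m}` into the `B`-neighborhood of the orbit `{fⁿ·x : n ∈ ℤ}`. -/
theorem stmt6 {G X Y : Type*} [Group G] [MetricSpace X] [MetricSpace Y]
    [MulAction G X] [MulAction G Y]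
    (hX : ∀ g : G, Isometry fun x : X => g • x)
    (hY : ∀ g : G, Isometry fun y : Y => g • y)
    (i : X → Y)
    (hequiv : ∀ (g : G) (x : X), i (g • x) = g • i x)
    (hlip : ∀ x x' : X, dist (i x) (i x') ≤ dist x x')
    (f g : G) (x y : X)
    (hbdd : Bornology.IsBounded (Set.range fun n : ℤ => i (f ^ n • x)))
    (c : ℝ) (hc : 0 < c)
    (hg : ∀ m n : ℤ, c * |(m : ℝ) - (n : ℝ)| ≤ dist (i (g ^ m • y)) (i (g ^ n • y))) :
    ∀ B : ℝ, 0 ≤ B → ∃ M : ℕ, ∀ m : ℕ, M ≤ m → ∀ h : G,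
      ∃ k : ℕ, k ≤ m ∧ ∀ n : ℤ, B < dist (h • (g ^ k • y)) (f ^ n • x) := by
  intro B hB
  obtain ⟨D, hD⟩ := Metric.isBounded_iff.mp hbdd
  obtain ⟨M, hM⟩ := exists_nat_gt ((2 * B + D) / c)
  refine ⟨M, fun m hm h => ?_⟩
  by_contra hcon
  push_neg at hcon
  obtain ⟨n0, hn0⟩ := (hcon 0 (Nat.zero_le m))
  obtain ⟨nm, hnm⟩ := (hcon m le_rfl)
  have key : c * m ≤ 2 * B + D := by
    have h1 : c * m ≤ dist (i (g ^ (m : ℤ) • y)) (i (g ^ (0 : ℤ) • y)) := by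
      have := hg (m : ℤ) 0
      simpa using this
    have h2 : dist (i (g ^ (m : ℤ) • y)) (i (g ^ (0 : ℤ) • y))
        = dist (i (h • g ^ (m : ℕ) • y)) (i (h • g ^ (0 : ℕ) • y)) := by
      rw [hequiv h, hequiv h, (hY h).dist_eq, zpow_natCast]
      norm_num
    have h3 : dist (i (h • g ^ (m : ℕ) • y)) (i (h • g ^ (0 : ℕ) • y)) ≤
        dist (i (h • g ^ (m : ℕ) • y)) (i (f ^ nm • x)) +
        dist (i (f ^ nm • x)) (i (f ^ n0 • x)) +
        dist (i (f ^ n0 • x)) (i (h • g ^ (0 : ℕ) • y)) := dist_triangle4 _ _ _ _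
    have h4 : dist (i (h • g ^ (m : ℕ) • y)) (i (f ^ nm • x)) ≤ B :=
      le_trans (hlip _ _) hnm
    have h5 : dist (i (f ^ n0 • x)) (i (h • g ^ (0 : ℕ) • y)) ≤ B := by
      rw [dist_comm]; exact le_trans (hlip _ _) hn0
    have h6 : dist (i (f ^ nm • x)) (i (f ^ n0 • x)) ≤ D :=
      hD ⟨nm, rfl⟩ ⟨n0, rfl⟩
    rw [h2] at h1
    linarith
  have hMm : ((2 * B + D) / c) < m := lt_of_lt_of_le hM (by exact_mod_cast hm)
  rw [div_lt_iff₀ hc] at hMm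
  linarith
end

section
/- Let Λ be a topological group and let Γ be a dense subgroup of Λ. Let φ : Γ → ℝ be a homogeneous quasimorphism on Γ that is continuous with respect to the subspace topology. Then there exists a homogeneous quasimorphism ψ : Λ → ℝ that is continuous and satisfies ψ(γ) = φ(γ) for every γ ∈ Γ. -/
open Filter Topology

/-!
Continuity of `φ` at `1` bounds `φ` on `Γ` near `1`, and the quasimorphism inequality then
bounds the oscillation of `φ` on `Γ` near every point of `Λ`. Choosing for each `l ∈ Λ` a value
of `φ` at a point of `Γ` close to `l` gives `A : Λ → ℝ` which, by density and continuity of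
multiplication, is a quasimorphism at bounded distance from `φ` on `Γ` and bounded near `1`.
Its homogenization `ψ g = lim A (g ^ 2 ^ k) / 2 ^ k` is a homogeneous quasimorphism at bounded
distance from `A`. It agrees with `φ` on `Γ` since homogeneous functions at bounded distance
coincide, and it is continuous since `n * |ψ x - ψ l| ≤ D + C` as soon as `x ^ n * l ^ (-n)` lies
in a neighbourhood of `1` on which `|ψ| ≤ C`.
-/

lemma tendsto_of_abs_sub_le_div_two_pow {u v : ℕ → ℝ} {L C : ℝ}
    (hu : Tendsto u atTop (𝓝 L)) (h : ∀ k, |u k - v k| ≤ C / 2 ^ k) :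
    Tendsto v atTop (𝓝 L) :=
  hu.congr_dist <| squeeze_zero (fun _ => dist_nonneg) h <|
    tendsto_const_nhds.div_atTop (tendsto_pow_atTop_atTop_of_one_lt one_lt_two)

section Quasimorphism

variable {G : Type*} [Group G]

def IsQuasimorphism (D : ℝ) (f : G → ℝ) : Prop :=
  ∀ a b : G, |f (a * b) - f a - f b| ≤ D

def IsPowHomogeneous (f : G → ℝ) : Prop :=
  ∀ (g : G) (n : ℤ), f (g ^ n) = n * f g

noncomputable def homogenization (f : G → ℝ) (g : G) : ℝ :=
  limUnder atTop fun k : ℕ => f (g ^ 2 ^ k) / 2 ^ k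

namespace IsQuasimorphism

variable {D : ℝ} {f : G → ℝ}

lemma abs_map_one_le (hf : IsQuasimorphism D f) : |f 1| ≤ D := by
  simpa using hf 1 1

lemma abs_map_pow_sub_le (hf : IsQuasimorphism D f) (g : G) (n : ℕ) :
    |f (g ^ n) - n * f g| ≤ (n + 1) * D := by
  induction n with
  | zero => simpa using hf.abs_map_one_le
  | succ n ih =>
    have := hf (g ^ n) g
    rw [← pow_succ] at this
    rw [abs_le] at this ih ⊢
    push_cast
    constructor <;> linarith

lemma abs_map_inv_add_le (hf : IsQuasimorphism D f) (g : G) : |f g⁻¹ + f g| ≤ 2 * D := by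
  have h := hf g⁻¹ g
  have h1 := hf.abs_map_one_le
  rw [inv_mul_cancel] at h
  rw [abs_le] at h h1 ⊢
  constructor <;> linarith

lemma dist_div_two_pow_succ_le (hf : IsQuasimorphism D f) (g : G) (k : ℕ) :
    dist (f (g ^ 2 ^ k) / 2 ^ k) (f (g ^ 2 ^ (k + 1)) / 2 ^ (k + 1)) ≤ D / 2 / 2 ^ k := by
  have h := hf (g ^ 2 ^ k) (g ^ 2 ^ k)
  rw [← pow_add, ← two_mul, ← pow_succ'] at h
  have e : f (g ^ 2 ^ k) / 2 ^ k - f (g ^ 2 ^ (k + 1)) / 2 ^ (k + 1)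
      = -((f (g ^ 2 ^ (k + 1)) - f (g ^ 2 ^ k) - f (g ^ 2 ^ k)) / 2 / 2 ^ k) := by
    field_simp
    ring
  rw [Real.dist_eq, e, abs_neg, abs_div, abs_div, abs_two, abs_pow, abs_two]
  gcongr

lemma tendsto_homogenization (hf : IsQuasimorphism D f) (g : G) :
    Tendsto (fun k : ℕ => f (g ^ 2 ^ k) / 2 ^ k) atTop (𝓝 (homogenization f g)) :=
  (cauchySeq_of_le_geometric_two (hf.dist_div_two_pow_succ_le g)).tendsto_limUnder

lemma abs_homogenization_sub_le (hf : IsQuasimorphism D f) (g : G) :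
    |homogenization f g - f g| ≤ D := by
  rw [← Real.dist_eq, dist_comm]
  simpa using dist_le_of_le_geometric_two_of_tendsto₀ (hf.dist_div_two_pow_succ_le g)
    (hf.tendsto_homogenization g)

lemma isQuasimorphism_homogenization (hf : IsQuasimorphism D f) :
    IsQuasimorphism (4 * D) (homogenization f) := by
  intro a b
  have h := hf a b
  have hab := hf.abs_homogenization_sub_le (a * b)
  have ha := hf.abs_homogenization_sub_le a
  have hb := hf.abs_homogenization_sub_le b
  rw [abs_le] at h hab ha hb ⊢
  constructor <;> linarith

lemma homogenization_pow (hf : IsQuasimorphism D f) (g : G) (n : ℕ) :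
    homogenization f (g ^ n) = n * homogenization f g := by
  refine tendsto_nhds_unique (hf.tendsto_homogenization (g ^ n)) <|
    tendsto_of_abs_sub_le_div_two_pow ((hf.tendsto_homogenization g).const_mul (n : ℝ))
      (C := (n + 1) * D) fun k => ?_
  rw [← pow_right_comm, mul_div_assoc', div_sub_div_same, abs_div,
    abs_of_pos (by positivity : (0 : ℝ) < 2 ^ k), abs_sub_comm]
  gcongr
  exact hf.abs_map_pow_sub_le _ n

lemma homogenization_inv (hf : IsQuasimorphism D f) (g : G) :
    homogenization f g⁻¹ = -homogenization f g := by
  refine tendsto_nhds_unique (hf.tendsto_homogenization g⁻¹) <|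
    tendsto_of_abs_sub_le_div_two_pow (hf.tendsto_homogenization g).neg
      (C := 2 * D) fun k => ?_
  rw [inv_pow, ← neg_div, div_sub_div_same, abs_div,
    abs_of_pos (by positivity : (0 : ℝ) < 2 ^ k), neg_sub_left, abs_neg]
  gcongr
  exact hf.abs_map_inv_add_le _

lemma isPowHomogeneous_homogenization (hf : IsQuasimorphism D f) :
    IsPowHomogeneous (homogenization f) := by
  intro g n
  cases n with
  | ofNat n => simpa using hf.homogenization_pow g n
  | negSucc n =>
    rw [zpow_negSucc, hf.homogenization_inv, hf.homogenization_pow, Int.cast_negSucc]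
    push_cast
    ring

end IsQuasimorphism

namespace IsPowHomogeneous

variable {f : G → ℝ}

lemma map_pow (hf : IsPowHomogeneous f) (g : G) (n : ℕ) : f (g ^ n) = n * f g := by
  simpa using hf g n

lemma abs_map_pow_sub_map_pow (hf : IsPowHomogeneous f) (g h : G) (n : ℕ) :
    |f (g ^ n) - f (h ^ n)| = n * |f g - f h| := by
  rw [hf.map_pow, hf.map_pow, ← mul_sub, abs_mul, Nat.abs_cast]

lemma eq_of_abs_sub_le {f' : G → ℝ} {C : ℝ} (hf : IsPowHomogeneous f)
    (hf' : IsPowHomogeneous f') (h : ∀ g, |f g - f' g| ≤ C) : f = f' := by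
  funext g
  by_contra hne
  have hpos : 0 < |f g - f' g| := abs_pos.2 (sub_ne_zero.2 hne)
  obtain ⟨n, hn⟩ := exists_nat_gt (C / |f g - f' g|)
  have hpow : |f (g ^ n) - f' (g ^ n)| = n * |f g - f' g| := by
    rw [hf.map_pow, hf'.map_pow, ← mul_sub, abs_mul, Nat.abs_cast]
  rw [div_lt_iff₀ hpos] at hn
  linarith [h (g ^ n)]

lemma continuous [TopologicalSpace G] [IsTopologicalGroup G] {D C : ℝ}
    (hf : IsPowHomogeneous f) (hq : IsQuasimorphism D f) (hb : ∀ᶠ x in 𝓝 1, |f x| ≤ C) :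
    Continuous f := by
  refine continuous_iff_continuousAt.2 fun l => Metric.tendsto_nhds.2 fun ε hε => ?_
  obtain ⟨n, hn⟩ := exists_nat_gt ((D + C) / ε)
  rw [div_lt_iff₀ hε] at hn
  have hlim : Tendsto (fun x => x ^ (n + 1) * (l ^ (n + 1))⁻¹) (𝓝 l) (𝓝 1) := by
    have h : Continuous fun x : G => x ^ (n + 1) * (l ^ (n + 1))⁻¹ := by fun_prop
    simpa using h.tendsto l
  filter_upwards [hlim.eventually hb] with x hx
  have hdef := hq (x ^ (n + 1) * (l ^ (n + 1))⁻¹) (l ^ (n + 1))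
  rw [inv_mul_cancel_right] at hdef
  have hmul : (n + 1 : ℝ) * |f x - f l| ≤ D + C := by
    rw [← Nat.cast_succ, ← hf.abs_map_pow_sub_map_pow, abs_le]
    rw [abs_le] at hdef hx
    constructor <;> linarith
  rw [Real.dist_eq]
  refine lt_of_mul_lt_mul_left (a := (n + 1 : ℝ)) ?_ (by positivity)
  linarith

end IsPowHomogeneous

lemma IsQuasimorphism.continuous_homogenization [TopologicalSpace G] [IsTopologicalGroup G]
    {D C : ℝ} {f : G → ℝ} (hf : IsQuasimorphism D f) (hb : ∀ᶠ x in 𝓝 1, |f x| ≤ C) :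
    Continuous (homogenization f) := by
  refine hf.isPowHomogeneous_homogenization.continuous hf.isQuasimorphism_homogenization
    (C := D + C) ?_
  filter_upwards [hb] with x hx
  linarith [hf.abs_homogenization_sub_le x, abs_sub_abs_le_abs_sub (homogenization f x) (f x)]

end Quasimorphism

section DenseSubgroup

variable {Λ : Type*} [Group Λ] [TopologicalSpace Λ] {Γ : Subgroup Λ} {φ : Γ → ℝ} {D E : ℝ}

def IsCoarseExtension (E : ℝ) (φ : Γ → ℝ) (A : Λ → ℝ) : Prop :=
  ∀ l, ∀ᶠ γ in comap ((↑) : Γ → Λ) (𝓝 l), |φ γ - A l| ≤ E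

lemma IsQuasimorphism.eventually_abs_sub_le [IsTopologicalGroup Λ] {C : ℝ}
    (hq : IsQuasimorphism D φ) (hb : ∀ᶠ η in 𝓝 1, |φ η| ≤ C) (l : Λ) :
    ∀ᶠ p in comap ((↑) : Γ → Λ) (𝓝 l) ×ˢ comap (↑) (𝓝 l), |φ p.1 - φ p.2| ≤ D + C := by
  have hlim : Tendsto (fun p : Γ × Γ => p.2⁻¹ * p.1) (comap (↑) (𝓝 l) ×ˢ comap (↑) (𝓝 l))
      (𝓝 1) := by
    have hval : Tendsto (fun γ : Γ => (γ : Λ)) (comap (↑) (𝓝 l)) (𝓝 l) := tendsto_comap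
    rw [nhds_subtype, tendsto_comap_iff]
    simpa [Function.comp_def] using (hval.comp tendsto_snd).inv.mul (hval.comp tendsto_fst)
  filter_upwards [hlim.eventually hb] with p hp
  have hdef := hq p.2 (p.2⁻¹ * p.1)
  rw [mul_inv_cancel_left] at hdef
  rw [abs_le] at hdef hp ⊢
  constructor <;> linarith

lemma exists_isCoarseExtension (hdense : Dense (Γ : Set Λ))
    (hosc : ∀ l : Λ, ∀ᶠ p in comap ((↑) : Γ → Λ) (𝓝 l) ×ˢ comap (↑) (𝓝 l),
      |φ p.1 - φ p.2| ≤ E) :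
    ∃ A : Λ → ℝ, IsCoarseExtension E φ A := by
  have key : ∀ l, ∃ a, ∀ᶠ γ in comap ((↑) : Γ → Λ) (𝓝 l), |φ γ - a| ≤ E := by
    intro l
    have := hdense.comap_val_nhds_neBot l
    obtain ⟨t, ht, hosct⟩ :=
      (eventually_prod_self_iff (r := fun γ δ => |φ γ - φ δ| ≤ E)).1 (hosc l)
    obtain ⟨γ₀, hγ₀⟩ := nonempty_of_mem ht
    exact ⟨φ γ₀, mem_of_superset ht fun γ hγ => hosct γ hγ γ₀ hγ₀⟩
  choose A hA using key
  exact ⟨A, hA⟩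

namespace IsCoarseExtension

variable {A : Λ → ℝ}

lemma isQuasimorphism [IsTopologicalGroup Λ] (hA : IsCoarseExtension E φ A)
    (hdense : Dense (Γ : Set Λ)) (hq : IsQuasimorphism D φ) :
    IsQuasimorphism (D + 3 * E) A := by
  intro l m
  have := hdense.comap_val_nhds_neBot l
  have := hdense.comap_val_nhds_neBot m
  have hmul : Tendsto (fun p : Γ × Γ => p.1 * p.2) (comap (↑) (𝓝 l) ×ˢ comap (↑) (𝓝 m))
      (comap (↑) (𝓝 (l * m))) := by
    rw [tendsto_comap_iff]
    simpa [Function.comp_def] using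
      (tendsto_comap.comp tendsto_fst).mul (tendsto_comap.comp tendsto_snd)
  obtain ⟨⟨γ, δ⟩, ⟨hγ, hδ⟩, hγδ⟩ :=
    (((hA l).prod_mk (hA m)).and (hmul.eventually (hA (l * m)))).exists
  have hdef := hq γ δ
  rw [abs_le] at hdef hγ hδ hγδ ⊢
  constructor <;> linarith

lemma abs_sub_le (hA : IsCoarseExtension E φ A) (γ : Γ) : |A γ - φ γ| ≤ E :=
  abs_sub_comm (φ γ) (A γ) ▸ (eventually_comap.1 (hA γ)).self_of_nhds γ rfl

lemma eventually_abs_le (hA : IsCoarseExtension E φ A) (hdense : Dense (Γ : Set Λ)) :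
    ∀ᶠ x in 𝓝 1, |A x| ≤ 2 * E + |A 1| := by
  filter_upwards [eventually_eventually_nhds.2 (eventually_comap.1 (hA 1))] with x hx
  have := hdense.comap_val_nhds_neBot x
  obtain ⟨γ, hγ1, hγx⟩ := ((eventually_comap.2 hx).and (hA x)).exists
  rw [abs_le] at hγ1 hγx ⊢
  constructor <;> linarith [le_abs_self (A 1), neg_abs_le (A 1)]

lemma homogenization_coe_eq (hA : IsCoarseExtension E φ A) (hAq : IsQuasimorphism D A)
    (hφ : IsPowHomogeneous φ) (γ : Γ) : homogenization A γ = φ γ := by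
  have hres : IsPowHomogeneous fun γ : Γ => homogenization A γ := fun γ n => by
    simpa using hAq.isPowHomogeneous_homogenization γ n
  refine congrFun (hres.eq_of_abs_sub_le hφ (C := D + E) fun γ => ?_) γ
  exact (_root_.abs_sub_le _ (A γ) _).trans <| add_le_add (hAq.abs_homogenization_sub_le γ)
    (hA.abs_sub_le γ)

end IsCoarseExtension

end DenseSubgroup

/-- A continuous homogeneous quasimorphism on a dense subgroup of a topological group extends
to a continuous homogeneous quasimorphism on the whole group. -/
theorem stmt7 {Λ : Type*} [Group Λ] [TopologicalSpace Λ] [IsTopologicalGroup Λ]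
    (Γ : Subgroup Λ) (hdense : Dense (Γ : Set Λ))
    (φ : Γ → ℝ)
    (hq : ∃ D ≥ (0 : ℝ), ∀ a b : Γ, |φ (a * b) - φ a - φ b| ≤ D)
    (hhom : ∀ (g : Γ) (n : ℤ), φ (g ^ n) = n * φ g)
    (hcont : Continuous φ) :
    ∃ ψ : Λ → ℝ,
      (∃ D ≥ (0 : ℝ), ∀ a b : Λ, |ψ (a * b) - ψ a - ψ b| ≤ D) ∧
      (∀ (g : Λ) (n : ℤ), ψ (g ^ n) = n * ψ g) ∧
      Continuous ψ ∧
      ∀ γ : Γ, ψ (γ : Λ) = φ γ := by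
  obtain ⟨D, hD, hq⟩ := hq
  replace hq : IsQuasimorphism D φ := hq
  have hsmall : ∀ᶠ η in 𝓝 (1 : Γ), |φ η| ≤ 1 := by
    have hφ1 : φ 1 = 0 := by simpa using hhom 1 0
    filter_upwards [hcont.continuousAt.eventually (Metric.closedBall_mem_nhds (φ 1) one_pos)]
      with η hη
    simpa [hφ1, Real.dist_eq] using hη
  obtain ⟨A, hA⟩ := exists_isCoarseExtension hdense (hq.eventually_abs_sub_le hsmall)
  have hAq := hA.isQuasimorphism hdense hq
  have hψhom := hAq.isPowHomogeneous_homogenization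
  refine ⟨homogenization A, ⟨_, by positivity, hAq.isQuasimorphism_homogenization⟩, hψhom, ?_, ?_⟩
  · exact hAq.continuous_homogenization (hA.eventually_abs_le hdense)
  · exact hA.homogenization_coe_eq hAq hhom
end
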